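/- Let P̃₀ ≠ P̃₁ be probability measures, and let Λ be the set of quadruples (π₀, π₁, P₀, P₁) with π₀, π₁ ≥ 0, π₀ + π₁ < 1, P₀, P₁ probability measures, P̃₀ = (1-π₀)P₀ + π₀P₁, and P̃₁ = (1-π₁)P₁ + π₁P₀. Then there exists a unique element (π₀*, π₁*, P₀*, P₁*) of Λ such that P₀* and P₁* are mutually irreducible; moreover, with π̃₀* = ν*(P̃₀, P̃₁) and π̃₁* = ν*(P̃₁, P̃₀), one has π₀* = π̃₀*(1-π̃₁*)/(1-π̃₀*π̃₁*) and π₁* = π̃₁*(1-π̃₀*)/(1-π̃₀*π̃₁*). -/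

import Mathlib

open MeasureTheory

/-- The mixture `(1-a)·P + a·Q` of two measures. -/
noncomputable def mix {X : Type*} [MeasurableSpace X] (a : ℝ) (P Q : Measure X) :
    Measure X :=
  ENNReal.ofReal (1 - a) • P + ENNReal.ofReal a • Q

/-- `G` is irreducible with respect to `H`: no decomposition `G = γ·H + (1-γ)·F'`
with `F'` a probability measure and `0 < γ ≤ 1`. -/
def Irred {X : Type*} [MeasurableSpace X] (G H : Measure X) : Prop :=
  ¬ ∃ (γ : ℝ) (F' : Measure X), IsProbabilityMeasure F' ∧ 0 < γ ∧ γ ≤ 1 ∧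
      G = mix γ F' H

/-- Mutual irreducibility. -/
def MutIrred {X : Type*} [MeasurableSpace X] (P Q : Measure X) : Prop :=
  Irred P Q ∧ Irred Q P

/-- The set of feasible mixture proportions of `H` in `F`. -/
def nuSet {X : Type*} [MeasurableSpace X] (F H : Measure X) : Set ℝ :=
  {α | α ∈ Set.Icc (0:ℝ) 1 ∧
    ∃ G' : Measure X, IsProbabilityMeasure G' ∧ F = mix α G' H}

/-- `ν*(F,H)`: the maximal proportion of `H` in `F`. -/
noncomputable def nuStar {X : Type*} [MeasurableSpace X] (F H : Measure X) : ℝ :=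
  sSup (nuSet F H)

/-- Feasible quadruples `(π₀, π₁, P₀, P₁)` for the contamination model with observed
contaminated distributions `Pt₀, Pt₁`. -/
def Feas {X : Type*} [MeasurableSpace X] (Pt₀ Pt₁ : Measure X)
    (q : ℝ × ℝ × Measure X × Measure X) : Prop :=
  0 ≤ q.1 ∧ 0 ≤ q.2.1 ∧ q.1 + q.2.1 < 1 ∧
  IsProbabilityMeasure q.2.2.1 ∧ IsProbabilityMeasure q.2.2.2 ∧
  Pt₀ = mix q.1 q.2.2.1 q.2.2.2 ∧ Pt₁ = mix q.2.1 q.2.2.2 q.2.2.1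


/-!
Peeling off the maximal proportion `ν₀ = ν*(P̃₀, P̃₁)` of `P̃₁` from `P̃₀` leaves a residual `R₀`
that is irreducible with respect to `P̃₁`, and symmetrically `P̃₁ = (1 - ν₁) R₁ + ν₁ P̃₀`.
Solving these two linear relations writes `P̃₀, P̃₁` as mixtures of `R₀, R₁` with the stated
weights; as `P̃₁` is itself a mixture of `R₁` and `R₀`, irreducibility of `R₀` with respect to
`P̃₁` is the same as with respect to `R₁`.

Conversely, a feasible `(π₀, π₁, P₀, P₁)` gives `P̃₀ = (1 - a) P₀ + a P̃₁` with
`a = π₀ / (1 - π₁)`, and irreducibility of `P₀` with respect to `P₁` forces `a = ν₀`. So `π₀, π₁`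
are determined by `ν₀, ν₁`, and then `P₀, P₁` are the residuals `R₀, R₁`.
-/

section Mixtures

variable {X : Type*} [MeasurableSpace X]

lemma mix_apply (a : ℝ) (P Q : Measure X) (s : Set X) :
    mix a P Q s = ENNReal.ofReal (1 - a) * P s + ENNReal.ofReal a * Q s := by
  simp [mix]

instance (a : ℝ) (P Q : Measure X) [IsFiniteMeasure P] [IsFiniteMeasure Q] :
    IsFiniteMeasure (mix a P Q) :=
  ⟨by rw [mix_apply]; finiteness⟩

lemma isProbabilityMeasure_mix {a : ℝ} (ha₀ : 0 ≤ a) (ha₁ : a ≤ 1) (P Q : Measure X)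
    [IsProbabilityMeasure P] [IsProbabilityMeasure Q] : IsProbabilityMeasure (mix a P Q) :=
  ⟨by rw [mix_apply, measure_univ, measure_univ, mul_one, mul_one,
    ← ENNReal.ofReal_add (by linarith) ha₀, sub_add_cancel, ENNReal.ofReal_one]⟩

lemma measureReal_mix_apply {a : ℝ} (ha₀ : 0 ≤ a) (ha₁ : a ≤ 1) (P Q : Measure X)
    [IsFiniteMeasure P] [IsFiniteMeasure Q] (s : Set X) :
    (mix a P Q).real s = (1 - a) * P.real s + a * Q.real s := by
  rw [measureReal_def, mix_apply, ENNReal.toReal_add (by finiteness) (by finiteness),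
    ENNReal.toReal_mul, ENNReal.toReal_mul, ENNReal.toReal_ofReal (by linarith),
    ENNReal.toReal_ofReal ha₀, measureReal_def, measureReal_def]

lemma ext_measureReal {μ ν : Measure X} [IsFiniteMeasure μ] [IsFiniteMeasure ν]
    (h : ∀ s, MeasurableSet s → μ.real s = ν.real s) : μ = ν :=
  Measure.ext fun s hs =>
    (ENNReal.toReal_eq_toReal_iff' (measure_ne_top μ s) (measure_ne_top ν s)).1 (h s hs)

lemma smul_le_iff_measureReal {c : ℝ} (hc : 0 ≤ c) {μ ν : Measure X} [IsFiniteMeasure μ]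
    [IsFiniteMeasure ν] :
    ENNReal.ofReal c • μ ≤ ν ↔ ∀ s, MeasurableSet s → c * μ.real s ≤ ν.real s := by
  rw [Measure.le_iff]
  refine forall₂_congr fun s _ => ?_
  rw [Measure.smul_apply, smul_eq_mul, ← ofReal_measureReal, ← ENNReal.ofReal_mul hc,
    ← ofReal_measureReal (μ := ν)]
  exact ENNReal.ofReal_le_ofReal_iff measureReal_nonneg

lemma mix_mix {a b : ℝ} (ha₀ : 0 ≤ a) (ha₁ : a ≤ 1) (hb₀ : 0 ≤ b) (hb₁ : b ≤ 1)
    (G K : Measure X) [IsFiniteMeasure G] [IsFiniteMeasure K] :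
    mix a G (mix b K G) = mix (a * (1 - b)) G K := by
  refine ext_measureReal fun s _ => ?_
  rw [measureReal_mix_apply ha₀ ha₁, measureReal_mix_apply hb₀ hb₁,
    measureReal_mix_apply (by nlinarith) (by nlinarith)]
  ring

lemma mix_solve {a b : ℝ} (ha₀ : 0 ≤ a) (ha₁ : a ≤ 1) (hb₀ : 0 ≤ b) (hb₁ : b ≤ 1)
    (hab : a * b < 1) {F G H K : Measure X} [IsFiniteMeasure F] [IsFiniteMeasure G]
    [IsFiniteMeasure H] [IsFiniteMeasure K] (hF : F = mix a G H) (hH : H = mix b K F) :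
    F = mix (a * (1 - b) / (1 - a * b)) G K := by
  have hD : 0 < 1 - a * b := by linarith
  refine ext_measureReal fun s _ => ?_
  have hf : F.real s = (1 - a) * G.real s + a * H.real s := by
    rw [hF, measureReal_mix_apply ha₀ ha₁]
  have hh : H.real s = (1 - b) * K.real s + b * F.real s := by
    rw [hH, measureReal_mix_apply hb₀ hb₁]
  rw [measureReal_mix_apply (by positivity) (by rw [div_le_one hD]; nlinarith)]
  field_simp
  linear_combination hf + a * hh
  
lemma mix_left_cancel {a : ℝ} (ha : a < 1) {P P' Q : Measure X} [IsFiniteMeasure Q]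
    (h : mix a P Q = mix a P' Q) : P = P' := by
  ext s _
  have hs := congrArg (· s) h
  simp only [mix_apply] at hs
  rwa [ENNReal.add_left_inj (by finiteness),
    ENNReal.mul_right_inj (by simpa using ha) ENNReal.ofReal_ne_top] at hs

end Mixtures

section MaximalProportion

variable {X : Type*} [MeasurableSpace X]

lemma mem_nuSet_iff {F H : Measure X} [IsProbabilityMeasure F] [IsProbabilityMeasure H]
    {α : ℝ} : α ∈ nuSet F H ↔ 0 ≤ α ∧ α ≤ 1 ∧ ENNReal.ofReal α • H ≤ F := by
  constructor
  · rintro ⟨⟨h0, h1⟩, G, -, rfl⟩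
    refine ⟨h0, h1, Measure.le_iff'.2 fun s => ?_⟩
    rw [Measure.smul_apply, smul_eq_mul, mix_apply]
    exact le_add_self
  · rintro ⟨h0, h1, hle⟩
    refine ⟨⟨h0, h1⟩, ?_⟩
    rcases h1.lt_or_eq with h1 | rfl
    · have hc : ENNReal.ofReal (1 - α) ≠ 0 := (ENNReal.ofReal_pos.2 (by linarith)).ne'
      have : IsFiniteMeasure (ENNReal.ofReal α • H) := ⟨by simp⟩
      refine ⟨(ENNReal.ofReal (1 - α))⁻¹ • (F - ENNReal.ofReal α • H), ⟨?_⟩, ?_⟩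
      · rw [Measure.smul_apply, Measure.sub_apply .univ hle, Measure.smul_apply, measure_univ,
          measure_univ, smul_eq_mul, smul_eq_mul, mul_one, ← ENNReal.ofReal_one,
          ← ENNReal.ofReal_sub _ h0, ENNReal.inv_mul_cancel hc ENNReal.ofReal_ne_top,
          ENNReal.ofReal_one]
      · rw [mix, smul_smul, ENNReal.mul_inv_cancel hc ENNReal.ofReal_ne_top, one_smul,
          Measure.sub_add_cancel_of_le hle]
    · have hHF : H = F := Measure.eq_of_le_of_measure_univ_eq (by simpa using hle) (by simp)
      exact ⟨F, inferInstance, by simp [mix, hHF]⟩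

lemma nuSet_bddAbove (F H : Measure X) : BddAbove (nuSet F H) :=
  ⟨1, fun _ h => h.1.2⟩

lemma le_nuStar {F H : Measure X} {α : ℝ} (h : α ∈ nuSet F H) : α ≤ nuStar F H :=
  le_csSup (nuSet_bddAbove F H) h

lemma isClosed_nuSet (F H : Measure X) [IsProbabilityMeasure F] [IsProbabilityMeasure H] :
    IsClosed (nuSet F H) := by
  have : nuSet F H =
      Set.Icc 0 1 ∩ ⋂ s ∈ {s : Set X | MeasurableSet s}, {α | α * H.real s ≤ F.real s} := by
    ext α
    simp only [mem_nuSet_iff, Set.mem_inter_iff, Set.mem_Icc, Set.mem_iInter, Set.mem_ofPred_eq,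
      and_assoc]
    exact and_congr_right fun h0 => and_congr_right fun _ => smul_le_iff_measureReal h0
  rw [this]
  exact isClosed_Icc.inter (isClosed_biInter fun s _ => isClosed_le (by fun_prop) (by fun_prop))

lemma nuStar_mem (F H : Measure X) [IsProbabilityMeasure F] [IsProbabilityMeasure H] :
    nuStar F H ∈ nuSet F H :=
  (isClosed_nuSet F H).csSup_mem ⟨0, ⟨le_rfl, zero_le_one⟩, F, inferInstance, by simp [mix]⟩
    (nuSet_bddAbove F H)

lemma nuStar_lt_one {F H : Measure X} [IsProbabilityMeasure F] [IsProbabilityMeasure H]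
    (hne : F ≠ H) : nuStar F H < 1 := by
  obtain ⟨-, h1, hle⟩ := mem_nuSet_iff.1 (nuStar_mem F H)
  refine h1.lt_of_ne fun h => hne ?_
  rw [h, ENNReal.ofReal_one, one_smul] at hle
  exact (Measure.eq_of_le_of_measure_univ_eq hle (by simp)).symm

lemma irred_iff {G H : Measure X} [IsProbabilityMeasure G] [IsProbabilityMeasure H] :
    Irred G H ↔ ∀ γ : ℝ, 0 < γ → ¬ ENNReal.ofReal γ • H ≤ G := by
  constructor
  · intro hirr γ hγ hle
    have hγ' : 0 < min γ 1 := lt_min hγ one_pos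
    have hmin : ENNReal.ofReal (min γ 1) • H ≤ ENNReal.ofReal γ • H := by
      gcongr
      exact min_le_left _ _
    obtain ⟨-, F', hF', hG⟩ := mem_nuSet_iff.2 ⟨hγ'.le, min_le_right _ _, hmin.trans hle⟩
    exact hirr ⟨_, F', hF', hγ', min_le_right _ _, hG⟩
  · rintro h ⟨γ, F', hF', hγ0, hγ1, hG⟩
    exact h γ hγ0 (mem_nuSet_iff.1 ⟨⟨hγ0.le, hγ1⟩, F', hF', hG⟩).2.2

lemma smul_le_mix_iff {α γ : ℝ} (hα₀ : 0 ≤ α) (hα₁ : α < 1) (hγ : 0 ≤ γ) (G H : Measure X)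
    [IsFiniteMeasure H] :
    ENNReal.ofReal (α + (1 - α) * γ) • H ≤ mix α G H ↔ ENNReal.ofReal γ • H ≤ G := by
  simp only [Measure.le_iff', Measure.smul_apply, smul_eq_mul, mix_apply]
  refine forall_congr' fun s => ?_
  rw [ENNReal.ofReal_add hα₀ (by nlinarith), ENNReal.ofReal_mul (by linarith), add_mul,
    add_comm (_ * G s), mul_assoc, ENNReal.add_le_add_iff_left (by finiteness),
    ENNReal.mul_le_mul_iff_right (by simpa using hα₁) ENNReal.ofReal_ne_top]

lemma nuStar_eq_iff_irred {α : ℝ} (hα₀ : 0 ≤ α) (hα₁ : α < 1) {F G H : Measure X}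
    [IsProbabilityMeasure F] [IsProbabilityMeasure G] [IsProbabilityMeasure H]
    (hF : F = mix α G H) : nuStar F H = α ↔ Irred G H := by
  have hα : α ∈ nuSet F H := ⟨⟨hα₀, hα₁.le⟩, G, inferInstance, hF⟩
  constructor
  · rintro hν ⟨γ, F', hF', hγ0, hγ1, hG⟩
    have hle := (mem_nuSet_iff.1 ⟨⟨hγ0.le, hγ1⟩, F', hF', hG⟩).2.2
    have hmem : α + (1 - α) * γ ∈ nuSet F H :=
      mem_nuSet_iff.2 ⟨by nlinarith, by nlinarith,
        hF ▸ (smul_le_mix_iff hα₀ hα₁ hγ0.le G H).2 hle⟩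
    have := le_nuStar hmem
    nlinarith
  · intro hirr
    refine le_antisymm (csSup_le ⟨α, hα⟩ fun β hβ => ?_) (le_nuStar hα)
    by_contra! hlt
    have hγ : 0 < (β - α) / (1 - α) := div_pos (by linarith) (by linarith)
    refine irred_iff.1 hirr _ hγ ((smul_le_mix_iff hα₀ hα₁ hγ.le G H).1 ?_)
    rw [mul_div_cancel₀ _ (by linarith), add_sub_cancel, ← hF]
    exact (mem_nuSet_iff.1 hβ).2.2

lemma irred_mix_iff {b : ℝ} (hb₀ : 0 ≤ b) (hb₁ : b < 1) (G K : Measure X)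
    [IsProbabilityMeasure G] [IsProbabilityMeasure K] :
    Irred G (mix b K G) ↔ Irred G K := by
  have := isProbabilityMeasure_mix hb₀ hb₁.le K G
  simp only [irred_iff]
  refine ⟨fun h γ hγ hle => ?_, fun h γ hγ hle => ?_⟩
  · have hD : 0 < 1 - b + γ * b := by nlinarith
    refine h (γ / (1 - b + γ * b)) (by positivity)
      ((smul_le_iff_measureReal (by positivity)).2 fun s hs => ?_)
    have hk := (smul_le_iff_measureReal hγ.le).1 hle s hs
    rw [measureReal_mix_apply hb₀ hb₁.le, div_mul_eq_mul_div, div_le_iff₀ hD]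
    nlinarith [mul_le_mul_of_nonneg_left hk (by linarith : (0 : ℝ) ≤ 1 - b)]
  · refine h (γ * (1 - b)) (by nlinarith)
      ((smul_le_iff_measureReal (by nlinarith)).2 fun s hs => ?_)
    have hk := (smul_le_iff_measureReal hγ.le).1 hle s hs
    rw [measureReal_mix_apply hb₀ hb₁.le] at hk
    nlinarith [mul_nonneg (mul_nonneg hγ.le hb₀) (measureReal_nonneg (μ := G) (s := s))]

end MaximalProportion

lemma eq_weight_of_ratios {t₀ t₁ : ℝ} (h₀ : t₀ ≠ 1) (h₁ : t₁ ≠ 1) (h : t₀ + t₁ ≠ 1) :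
    t₀ = t₀ / (1 - t₁) * (1 - t₁ / (1 - t₀)) / (1 - t₀ / (1 - t₁) * (t₁ / (1 - t₀))) := by
  have h₀' : 1 - t₀ ≠ 0 := sub_ne_zero.2 h₀.symm
  have h₁' : 1 - t₁ ≠ 0 := sub_ne_zero.2 h₁.symm
  have h' : 1 - t₀ - t₁ ≠ 0 := by contrapose! h; linarith
  have hD : 1 - t₀ / (1 - t₁) * (t₁ / (1 - t₀)) = (1 - t₀ - t₁) / ((1 - t₀) * (1 - t₁)) := by
    field_simp
    ring
  rw [hD]
  field_simp

section Contamination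

variable {X : Type*} [MeasurableSpace X] {Pt₀ Pt₁ : Measure X}
  [IsProbabilityMeasure Pt₀] [IsProbabilityMeasure Pt₁]

lemma nuStar_eq_of_mix_of_irred {t₀ t₁ : ℝ} (ht₀ : 0 ≤ t₀) (ht₁ : 0 ≤ t₁) (hsum : t₀ + t₁ < 1)
    {Q₀ Q₁ : Measure X} [IsProbabilityMeasure Q₀] [IsProbabilityMeasure Q₁]
    (h₀ : Pt₀ = mix t₀ Q₀ Q₁) (h₁ : Pt₁ = mix t₁ Q₁ Q₀) (hirr : Irred Q₀ Q₁) :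
    nuStar Pt₀ Pt₁ = t₀ / (1 - t₁) ∧ Pt₀ = mix (nuStar Pt₀ Pt₁) Q₀ Pt₁ := by
  have h1t₁ : 0 < 1 - t₁ := by linarith
  have hmix : Pt₀ = mix (t₀ / (1 - t₁)) Q₀ Pt₁ := by
    rw [h₁, mix_mix (by positivity) (by rw [div_le_one h1t₁]; linarith) ht₁ (by linarith),
      div_mul_cancel₀ _ h1t₁.ne', h₀]
  have hirr' : Irred Q₀ Pt₁ := by
    rw [h₁]
    exact (irred_mix_iff ht₁ (by linarith) Q₀ Q₁).2 hirr
  have hν := (nuStar_eq_iff_irred (by positivity) (by rw [div_lt_one h1t₁]; linarith) hmix).2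
    hirr'
  exact ⟨hν, hν ▸ hmix⟩

lemma feas_of_residuals {ν₀ ν₁ : ℝ} (hν₀ : 0 ≤ ν₀) (hν₁ : 0 ≤ ν₁) (hν₀1 : ν₀ < 1) (hν₁1 : ν₁ < 1)
    {R₀ R₁ : Measure X} [IsProbabilityMeasure R₀] [IsProbabilityMeasure R₁]
    (hR₀ : Pt₀ = mix ν₀ R₀ Pt₁) (hR₁ : Pt₁ = mix ν₁ R₁ Pt₀) :
    Feas Pt₀ Pt₁ (ν₀ * (1 - ν₁) / (1 - ν₀ * ν₁), ν₁ * (1 - ν₀) / (1 - ν₀ * ν₁), R₀, R₁) := by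
  have hD : 0 < 1 - ν₀ * ν₁ := by nlinarith
  refine ⟨div_nonneg (mul_nonneg hν₀ (by linarith)) hD.le,
    div_nonneg (mul_nonneg hν₁ (by linarith)) hD.le, ?_, inferInstance, inferInstance,
    mix_solve hν₀ hν₀1.le hν₁ hν₁1.le (by nlinarith) hR₀ hR₁, ?_⟩
  · rw [← add_div, div_lt_one hD]
    nlinarith
  · rw [mul_comm ν₀ ν₁]
    exact mix_solve hν₁ hν₁1.le hν₀ hν₀1.le (by nlinarith) hR₁ hR₀

lemma mutIrred_of_nuStar_residuals {R₀ R₁ : Measure X} [IsProbabilityMeasure R₀]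
    [IsProbabilityMeasure R₁] (hν₀1 : nuStar Pt₀ Pt₁ < 1) (hν₁1 : nuStar Pt₁ Pt₀ < 1)
    (hR₀ : Pt₀ = mix (nuStar Pt₀ Pt₁) R₀ Pt₁) (hR₁ : Pt₁ = mix (nuStar Pt₁ Pt₀) R₁ Pt₀) :
    MutIrred R₀ R₁ := by
  have hν₀ := (nuStar_mem Pt₀ Pt₁).1.1
  have hν₁ := (nuStar_mem Pt₁ Pt₀).1.1
  obtain ⟨hπ₀, hπ₁, hsum, -, -, h₀, h₁⟩ := feas_of_residuals hν₀ hν₁ hν₀1 hν₁1 hR₀ hR₁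
  have hirr₀ : Irred R₀ Pt₁ := (nuStar_eq_iff_irred hν₀ hν₀1 hR₀).1 rfl
  have hirr₁ : Irred R₁ Pt₀ := (nuStar_eq_iff_irred hν₁ hν₁1 hR₁).1 rfl
  rw [h₁] at hirr₀
  rw [h₀] at hirr₁
  exact ⟨(irred_mix_iff hπ₁ (by linarith) R₀ R₁).1 hirr₀,
    (irred_mix_iff hπ₀ (by linarith) R₁ R₀).1 hirr₁⟩

lemma Feas.eq_of_mutIrred {q : ℝ × ℝ × Measure X × Measure X} {R₀ R₁ : Measure X}
    (hq : Feas Pt₀ Pt₁ q) (hirr : MutIrred q.2.2.1 q.2.2.2)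
    (hν₀1 : nuStar Pt₀ Pt₁ < 1) (hν₁1 : nuStar Pt₁ Pt₀ < 1)
    (hR₀ : Pt₀ = mix (nuStar Pt₀ Pt₁) R₀ Pt₁) (hR₁ : Pt₁ = mix (nuStar Pt₁ Pt₀) R₁ Pt₀) :
    q = (nuStar Pt₀ Pt₁ * (1 - nuStar Pt₁ Pt₀) / (1 - nuStar Pt₀ Pt₁ * nuStar Pt₁ Pt₀),
      nuStar Pt₁ Pt₀ * (1 - nuStar Pt₀ Pt₁) / (1 - nuStar Pt₀ Pt₁ * nuStar Pt₁ Pt₀), R₀, R₁) := by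
  obtain ⟨t₀, t₁, Q₀, Q₁⟩ := q
  obtain ⟨ht₀, ht₁, hsum, _, _, h₀, h₁⟩ := hq
  obtain ⟨hirr₀, hirr₁⟩ := hirr
  obtain ⟨hν₀, hQ₀⟩ := nuStar_eq_of_mix_of_irred ht₀ ht₁ hsum h₀ h₁ hirr₀
  obtain ⟨hν₁, hQ₁⟩ := nuStar_eq_of_mix_of_irred ht₁ ht₀ (by linarith) h₁ h₀ hirr₁
  simp only [Prod.mk.injEq]
  refine ⟨?_, ?_, mix_left_cancel hν₀1 (hQ₀.symm.trans hR₀),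
    mix_left_cancel hν₁1 (hQ₁.symm.trans hR₁)⟩
  · rw [hν₀, hν₁]
    exact eq_weight_of_ratios (by linarith) (by linarith) (by linarith)
  · rw [hν₀, hν₁, mul_comm (t₀ / _)]
    exact eq_weight_of_ratios (by linarith) (by linarith) (by linarith)

end Contamination

theorem unique_mutually_irreducible_solution {X : Type*} [MeasurableSpace X]
    (Pt₀ Pt₁ : Measure X) [IsProbabilityMeasure Pt₀] [IsProbabilityMeasure Pt₁]
    (hne : Pt₀ ≠ Pt₁) :
    (∃! q : ℝ × ℝ × Measure X × Measure X,
        Feas Pt₀ Pt₁ q ∧ MutIrred q.2.2.1 q.2.2.2) ∧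
    ∀ q : ℝ × ℝ × Measure X × Measure X,
      Feas Pt₀ Pt₁ q → MutIrred q.2.2.1 q.2.2.2 →
      q.1 = nuStar Pt₀ Pt₁ * (1 - nuStar Pt₁ Pt₀) /
              (1 - nuStar Pt₀ Pt₁ * nuStar Pt₁ Pt₀) ∧
      q.2.1 = nuStar Pt₁ Pt₀ * (1 - nuStar Pt₀ Pt₁) /
              (1 - nuStar Pt₀ Pt₁ * nuStar Pt₁ Pt₀) := by
  obtain ⟨⟨hν₀, -⟩, R₀, _, hR₀⟩ := nuStar_mem Pt₀ Pt₁
  obtain ⟨⟨hν₁, -⟩, R₁, _, hR₁⟩ := nuStar_mem Pt₁ Pt₀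
  have hν₀1 := nuStar_lt_one hne
  have hν₁1 := nuStar_lt_one hne.symm
  have huniq := fun q (hq : Feas Pt₀ Pt₁ q) hirr => hq.eq_of_mutIrred hirr hν₀1 hν₁1 hR₀ hR₁
  refine ⟨⟨_, ⟨feas_of_residuals hν₀ hν₁ hν₀1 hν₁1 hR₀ hR₁,
    mutIrred_of_nuStar_residuals hν₀1 hν₁1 hR₀ hR₁⟩, fun q hq => huniq q hq.1 hq.2⟩,
    fun q hq hirr => ?_⟩
  rw [huniq q hq hirr]
  exact ⟨rfl, rfl⟩
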